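/- A ring R is strongly periodic if and only if R is a 2-primal weakly periodic ring, where 2-primal means N(R) = P(R) and weakly periodic means every element is the sum of a potent element and a nilpotent element. -/

import Mathlib

/-- A two-sided ideal `P` is prime if it is proper and `aRb ⊆ P` implies `a ∈ P` or `b ∈ P`. -/
def TwoSidedIdeal.IsPrime {R : Type*} [Ring R] (P : TwoSidedIdeal R) : Prop :=
  (P : Set R) ≠ Set.univ ∧ ∀ a b : R, (∀ r : R, a * r * b ∈ P) → a ∈ P ∨ b ∈ P

/-- The prime radical `P(R)`: the intersection of all prime (two-sided) ideals of `R`. -/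
def primeRadical (R : Type*) [Ring R] : TwoSidedIdeal R :=
  sInf {P : TwoSidedIdeal R | P.IsPrime}

/-- An element `p` is potent if `p = p ^ m` for some `m ≥ 2`. -/
def IsPotent {R : Type*} [Ring R] (p : R) : Prop :=
  ∃ m : ℕ, 2 ≤ m ∧ p = p ^ m

/-- A ring is strongly periodic if every element is the sum of a commuting potent element
and an element of the prime radical. -/
def StronglyPeriodicRing (R : Type*) [Ring R] : Prop :=
  ∀ a : R, ∃ p : R, IsPotent p ∧ a - p ∈ primeRadical R ∧ a * p = p * a


/-!
A non-nilpotent `x` lies outside every ideal that is maximal among those containing no power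
of `x`, and such an ideal is prime; hence `P(R)` is nil. In a strongly periodic ring a nilpotent
`x = p + u` with `u ∈ P(R)` commuting with `x` makes the potent `p = x - u` nilpotent, hence `0`.

Conversely, once `N(R) = P(R)` is an ideal, `b - p ∈ P(R)` with `p = p ^ m` gives
`b - b ^ m ∈ P(R)`, so every `b - b ^ m` is nilpotent. For `b = 2` this shows that `R` has nonzero
characteristic, and for `b = a` that `a` is integral over `ℤ`; so `ℤ[a]` is finite and
`a ^ (i + d) = a ^ i` with `d > 0`. Then `e = a ^ (i d)` is idempotent, `p = a e` is potent and
commutes with `a`, and `a - p = a (1 - e)` is nilpotent.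
-/

open Polynomial

namespace TwoSidedIdeal

variable {R : Type*} [Ring R]

lemma pow_sub_pow_mem (I : TwoSidedIdeal R) {a b : R} (h : a - b ∈ I) (n : ℕ) :
    a ^ n - b ^ n ∈ I :=
  (I.rel_iff _ _).mp (I.ringCon.toCon.pow n ((I.rel_iff _ _).mpr h))

lemma exists_mem_of_mem_sSup_of_isChain {c : Set (TwoSidedIdeal R)} (hc : IsChain (· ≤ ·) c)
    (hne : c.Nonempty) {x : R} (hx : x ∈ sSup c) : ∃ I ∈ c, x ∈ I := by
  let U : TwoSidedIdeal R := mk' (⋃ I ∈ c, (I : Set R))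
    (Set.mem_biUnion hne.some_mem (zero_mem _))
    (fun {y z} hy hz => by
      obtain ⟨I, hI, hy⟩ := Set.mem_iUnion₂.mp hy
      obtain ⟨J, hJ, hz⟩ := Set.mem_iUnion₂.mp hz
      rcases hc.total hI hJ with hIJ | hJI
      · exact Set.mem_biUnion hJ (J.add_mem (hIJ hy) hz)
      · exact Set.mem_biUnion hI (I.add_mem hy (hJI hz)))
    (fun {y} hy => by
      obtain ⟨I, hI, hy⟩ := Set.mem_iUnion₂.mp hy
      exact Set.mem_biUnion hI (I.neg_mem hy))
    (fun {y z} hz => by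
      obtain ⟨I, hI, hz⟩ := Set.mem_iUnion₂.mp hz
      exact Set.mem_biUnion hI (I.mul_mem_left y z hz))
    (fun {y z} hy => by
      obtain ⟨I, hI, hy⟩ := Set.mem_iUnion₂.mp hy
      exact Set.mem_biUnion hI (I.mul_mem_right y z hy))
  have hU : sSup c ≤ U := sSup_le fun I hI y hy => (mem_mk' ..).mpr (Set.mem_biUnion hI hy)
  simpa [U] using hU hx

def leftColon (I : TwoSidedIdeal R) (b : R) : TwoSidedIdeal R :=
  mk' {y | ∀ r, y * r * b ∈ I} (by simp)
    (fun hy hz r => by simpa [add_mul] using I.add_mem (hy r) (hz r))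
    (fun hy r => by simpa using I.neg_mem (hy r))
    (fun {x y} hy r => by simpa [mul_assoc] using I.mul_mem_left x _ (hy r))
    (fun {x y} hx r => by simpa [mul_assoc] using hx (y * r))

def rightColon (I : TwoSidedIdeal R) (a : R) : TwoSidedIdeal R :=
  mk' {z | ∀ r, a * r * z ∈ I} (by simp)
    (fun hy hz r => by simpa [mul_add] using I.add_mem (hy r) (hz r))
    (fun hy r => by simpa using I.neg_mem (hy r))
    (fun {x y} hy r => by simpa [mul_assoc] using hy (r * x))
    (fun {x y} hx r => by simpa [mul_assoc] using I.mul_mem_right _ y (hx r))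

lemma mem_leftColon {I : TwoSidedIdeal R} {b y : R} : y ∈ I.leftColon b ↔ ∀ r, y * r * b ∈ I :=
  mem_mk' ..

lemma mem_rightColon {I : TwoSidedIdeal R} {a z : R} :
    z ∈ I.rightColon a ↔ ∀ r, a * r * z ∈ I :=
  mem_mk' ..

lemma le_leftColon (I : TwoSidedIdeal R) (b : R) : I ≤ I.leftColon b :=
  fun y hy => mem_leftColon.mpr fun r => I.mul_mem_right _ b (I.mul_mem_right y r hy)

lemma le_rightColon (I : TwoSidedIdeal R) (a : R) : I ≤ I.rightColon a :=
  fun z hz => mem_rightColon.mpr fun r => I.mul_mem_left (a * r) z hz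

lemma exists_isPrime_not_mem_of_not_isNilpotent {x : R} (hx : ¬IsNilpotent x) :
    ∃ P : TwoSidedIdeal R, P.IsPrime ∧ x ∉ P := by
  let S : Set (TwoSidedIdeal R) := {I | ∀ n, x ^ n ∉ I}
  have hbot : ⊥ ∈ S := fun n hn => hx ⟨n, (mem_bot R).mp hn⟩
  have hchain : ∀ c ⊆ S, IsChain (· ≤ ·) c → ∀ I ∈ c, ∃ ub ∈ S, ∀ J ∈ c, J ≤ ub :=
    fun c hcS hc I hI => ⟨sSup c, fun n hn => by
      obtain ⟨J, hJ, hnJ⟩ := exists_mem_of_mem_sSup_of_isChain hc ⟨I, hI⟩ hn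
      exact hcS hJ n hnJ, fun J hJ => le_sSup hJ⟩
  obtain ⟨M, -, hMS, hMmax⟩ := zorn_le_nonempty₀ S hchain ⊥ hbot
  have hproper : (M : Set R) ≠ Set.univ := fun h => hMS 0 (by simp [← SetLike.mem_coe, h])
  refine ⟨M, ⟨hproper, fun a b hab => ?_⟩, by simpa using hMS 1⟩
  by_contra! hnot
  obtain ⟨i, hi⟩ : ∃ i, x ^ i ∈ M.leftColon b := by
    by_contra! h
    exact hnot.1 (hMmax h (le_leftColon M b) (mem_leftColon.mpr hab))
  obtain ⟨j, hj⟩ : ∃ j, x ^ j ∈ M.rightColon (x ^ i) := by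
    by_contra! h
    exact hnot.2 (hMmax h (le_rightColon M _) (mem_rightColon.mpr (mem_leftColon.mp hi)))
  exact hMS (i + j) (by simpa [pow_add] using mem_rightColon.mp hj 1)

end TwoSidedIdeal

section

variable {R : Type*} [Ring R]

lemma isNilpotent_of_mem_primeRadical {x : R} (hx : x ∈ primeRadical R) : IsNilpotent x := by
  by_contra hnil
  obtain ⟨P, hP, hxP⟩ := TwoSidedIdeal.exists_isPrime_not_mem_of_not_isNilpotent hnil
  exact hxP ((sInf_le hP : primeRadical R ≤ P) hx)

lemma IsPotent.eq_zero_of_isNilpotent {p : R} (hp : IsPotent p) (hn : IsNilpotent p) : p = 0 := by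
  obtain ⟨m, hm, hpm⟩ := hp
  obtain ⟨n, rfl⟩ : ∃ n, m = n + 2 := ⟨m - 2, by omega⟩
  have he : IsIdempotentElem (p ^ (n + 1)) := by
    rw [IsIdempotentElem, ← pow_add, show n + 1 + (n + 1) = n + (n + 2) by ring, pow_add, ← hpm,
      ← pow_succ]
  rw [hpm, pow_succ', he.eq_zero_of_isNilpotent (hn.pow_of_pos n.succ_ne_zero), mul_zero]

lemma mem_primeRadical_of_isNilpotent (hR : StronglyPeriodicRing R) {x : R} (hx : IsNilpotent x) :
    x ∈ primeRadical R := by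
  obtain ⟨p, hp, hxp, hcomm⟩ := hR x
  have hpn : IsNilpotent p := by
    simpa using ((Commute.refl x).sub_right hcomm).isNilpotent_sub hx
      (isNilpotent_of_mem_primeRadical hxp)
  simpa [hp.eq_zero_of_isNilpotent hpn] using hxp

lemma exists_sub_pow_mem_of_isPotent (I : TwoSidedIdeal R) {b p : R} (hp : IsPotent p)
    (h : b - p ∈ I) : ∃ m, 2 ≤ m ∧ b - b ^ m ∈ I := by
  obtain ⟨m, hm, hpm⟩ := hp
  refine ⟨m, hm, ?_⟩
  simpa [← hpm] using I.sub_mem h (I.pow_sub_pow_mem h m)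

lemma exists_natCast_eq_zero_of_isNilpotent_two_sub_pow {m : ℕ} (hm : 2 ≤ m)
    (h : IsNilpotent ((2 : R) - 2 ^ m)) : ∃ N : ℕ, N ≠ 0 ∧ (N : R) = 0 := by
  obtain ⟨k, hk⟩ := h.neg
  have h4 : 2 ^ 2 ≤ 2 ^ m := Nat.pow_le_pow_right (by norm_num) hm
  refine ⟨(2 ^ m - 2) ^ k, pow_ne_zero _ (by omega), ?_⟩
  simpa [Nat.cast_sub (by omega : 2 ≤ 2 ^ m)] using hk

lemma isIntegral_of_isNilpotent_sub_pow {S : Type*} [CommRing S] [Algebra S R] {a : R} {m : ℕ}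
    (hm : 2 ≤ m) (h : IsNilpotent (a - a ^ m)) : IsIntegral S a := by
  obtain ⟨k, hk⟩ := h.neg
  refine ⟨(X ^ m - X) ^ k, (monic_X_pow_sub (degree_X_le.trans_lt ?_)).pow k, ?_⟩
  · exact_mod_cast (by omega : 1 < m)
  · rw [← aeval_def]
    simpa using hk

lemma exists_pow_add_eq_pow_of_isIntegral {a : R} (ha : IsIntegral ℤ a) {N : ℕ} (hN : N ≠ 0)
    (hNR : (N : R) = 0) : ∃ i d, 0 < d ∧ a ^ (i + d) = a ^ i := by
  let A := Algebra.adjoin ℤ {a}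
  have : Module.Finite ℤ A := Module.Finite.iff_fg.mpr ha.fg_adjoin_singleton
  have : Finite A := Module.finite_of_fg_torsion A fun y =>
    ⟨⟨N, mem_nonZeroDivisors_of_ne_zero (by exact_mod_cast hN)⟩,
      Subtype.ext (by simp [zsmul_eq_mul, hNR])⟩
  obtain ⟨k, l, hkl, hpow⟩ := Finite.exists_ne_map_eq_of_infinite
    fun n : ℕ => (⟨a ^ n, pow_mem (Algebra.self_mem_adjoin_singleton ℤ a) n⟩ : A)
  have hpow : a ^ k = a ^ l := congrArg Subtype.val hpow
  rcases Nat.lt_or_gt_of_ne hkl with hlt | hlt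
  · exact ⟨k, l - k, by omega, by rw [hpow, Nat.add_sub_cancel' hlt.le]⟩
  · exact ⟨l, k - l, by omega, by rw [← hpow, Nat.add_sub_cancel' hlt.le]⟩

lemma pow_add_mul_eq_of_pow_add_eq {a : R} {i d : ℕ} (h : a ^ (i + d) = a ^ i) ⦃t : ℕ⦄
    (ht : i ≤ t) (k : ℕ) : a ^ (t + k * d) = a ^ t := by
  have hstep : ∀ t, i ≤ t → a ^ (t + d) = a ^ t := fun t ht => by
    obtain ⟨r, rfl⟩ := Nat.exists_eq_add_of_le ht
    rw [add_right_comm, pow_add, h, ← pow_add]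
  induction k with
  | zero => simp
  | succ k ih => rw [add_one_mul, ← add_assoc, hstep _ (by omega), ih]

lemma exists_isPotent_isNilpotent_sub_of_pow_add_eq {a : R} {i d : ℕ} (hd : 0 < d)
    (h : a ^ (i + d) = a ^ i) : ∃ p, IsPotent p ∧ IsNilpotent (a - p) ∧ a * p = p * a := by
  have hper := pow_add_mul_eq_of_pow_add_eq h
  set e := a ^ (i * d) with he_def
  have he : IsIdempotentElem e := by
    rw [IsIdempotentElem, ← pow_add, hper (Nat.le_mul_of_pos_right i hd)]
  have hae : Commute a e := (Commute.refl a).pow_right _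
  refine ⟨a * e, ⟨d + 1, by omega, ?_⟩, ⟨i * d + 1, ?_⟩, ((Commute.refl a).mul_right hae).eq⟩
  · rw [he_def, ← pow_succ', ← pow_mul,
      show (i * d + 1) * (d + 1) = i * d + 1 + (i * d + 1) * d by ring, hper (by nlinarith)]
  · rw [← mul_one_sub, ((Commute.one_right a).sub_right hae).mul_pow, he.one_sub.pow_succ_eq,
      pow_succ', mul_assoc, he.mul_one_sub_self, mul_zero]

lemma exists_isPotent_isNilpotent_sub_of_forall_isNilpotent_sub_pow
    (h : ∀ b : R, ∃ m, 2 ≤ m ∧ IsNilpotent (b - b ^ m)) (a : R) :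
    ∃ p, IsPotent p ∧ IsNilpotent (a - p) ∧ a * p = p * a := by
  obtain ⟨m₂, hm₂, h₂⟩ := h 2
  obtain ⟨N, hN, hNR⟩ := exists_natCast_eq_zero_of_isNilpotent_two_sub_pow hm₂ h₂
  obtain ⟨m, hm, ha⟩ := h a
  obtain ⟨i, d, hd, hid⟩ :=
    exists_pow_add_eq_pow_of_isIntegral (isIntegral_of_isNilpotent_sub_pow hm ha) hN hNR
  exact exists_isPotent_isNilpotent_sub_of_pow_add_eq hd hid

end

theorem stronglyPeriodic_iff_twoPrimal_weaklyPeriodic (R : Type*) [Ring R] :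
    StronglyPeriodicRing R ↔
      ({x : R | IsNilpotent x} = (primeRadical R : Set R) ∧
        ∀ a : R, ∃ p : R, IsPotent p ∧ IsNilpotent (a - p)) := by
  constructor
  · intro hR
    refine ⟨Set.ext fun x =>
      ⟨mem_primeRadical_of_isNilpotent hR, isNilpotent_of_mem_primeRadical⟩, fun a => ?_⟩
    obtain ⟨p, hp, hap, -⟩ := hR a
    exact ⟨p, hp, isNilpotent_of_mem_primeRadical hap⟩
  · rintro ⟨hNP, hWP⟩
    have hmem : ∀ x : R, IsNilpotent x ↔ x ∈ primeRadical R := fun x => Set.ext_iff.mp hNP x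
    have hper : ∀ b : R, ∃ m, 2 ≤ m ∧ IsNilpotent (b - b ^ m) := fun b => by
      obtain ⟨p, hp, hbp⟩ := hWP b
      obtain ⟨m, hm, hbm⟩ := exists_sub_pow_mem_of_isPotent _ hp ((hmem _).mp hbp)
      exact ⟨m, hm, (hmem _).mpr hbm⟩
    intro a
    obtain ⟨p, hp, hap, hcomm⟩ :=
      exists_isPotent_isNilpotent_sub_of_forall_isNilpotent_sub_pow hper a
    exact ⟨p, hp, (hmem _).mp hap, hcomm⟩
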